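/- arXiv:1812.00368 — 9 statements merged into one kernel-verified Lean document; each statement's English description precedes it below -/
import Mathlib

section
/- Let W be a weighing matrix W(n,m), let B be an n×b point-by-block incidence matrix of an (r,λ)-design on n points, and let G = [W|B] be the n×(n+b) block matrix over F_q obtained by reducing entries modulo p. If (r + (n−1)λ + m) ≠ 0 and (r − λ + m) ≠ 0 in F_q, then G generates an LCD code C of length n+b and dimension n over F_q. -/
/-!
A code with generator matrix `G` over a field is LCD of dimension the number of rows of `G` as
soon as the Gram matrix `G Gᵀ` is invertible: a codeword `x G` orthogonal to every row of `G`
satisfies `x (G Gᵀ) = 0`. For `G = [W | B]` the Gram matrix is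
`W Wᵀ + B Bᵀ = (r - λ + m) I + λ J`; writing `a = r - λ + m`, its inverse is
`a⁻¹ I - λ / (a (a + n λ)) J` whenever `a ≠ 0` and `a + n λ = r + (n - 1) λ + m ≠ 0`.
-/

open Matrix BigOperators

/-- The row span of a matrix `G`: the linear code generated by the rows of `G`. -/
def rowSpan (F : Type*) [Field F] {k ι : Type*} (G : Matrix k ι F) : Submodule F (ι → F) :=
  Submodule.span F (Set.range fun i => G i)

/-- The dual of a linear code under the standard dot product. -/
def dualCode {F : Type*} [Field F] {ι : Type*} [Fintype ι] (C : Submodule F (ι → F)) :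
    Submodule F (ι → F) where
  carrier := {v | ∀ c ∈ C, v ⬝ᵥ c = 0}
  add_mem' := by
    intro a b ha hb c hc
    rw [add_dotProduct, ha c hc, hb c hc, add_zero]
  zero_mem' := by
    intro c hc
    rw [zero_dotProduct]
  smul_mem' := by
    intro r a ha c hc
    rw [smul_dotProduct, ha c hc, smul_zero]

/-- A linear code is LCD (linear complementary dual) if it meets its dual trivially. -/
def IsLCD {F : Type*} [Field F] {ι : Type*} [Fintype ι] (C : Submodule F (ι → F)) : Prop :=
  C ⊓ dualCode C = ⊥


section LCD

variable {F : Type*} [Field F] {k ι : Type*} [Fintype k] [DecidableEq k] [Fintype ι]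

theorem vecMul_injective_of_isUnit_mul_transpose {G : Matrix k ι F} (hG : IsUnit (G * Gᵀ)) :
    Function.Injective G.vecMul := by
  refine Function.Injective.of_comp (f := (Gᵀ).vecMul) ?_
  simpa only [Function.comp_def, vecMul_vecMul] using vecMul_injective_of_isUnit hG

theorem finrank_rowSpan_of_isUnit_mul_transpose {G : Matrix k ι F} (hG : IsUnit (G * Gᵀ)) :
    Module.finrank F (rowSpan F G) = Fintype.card k :=
  finrank_span_eq_card <| Matrix.vecMul_injective_iff.1 <|
    vecMul_injective_of_isUnit_mul_transpose hG

theorem isLCD_rowSpan_of_isUnit_mul_transpose {G : Matrix k ι F} (hG : IsUnit (G * Gᵀ)) :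
    IsLCD (rowSpan F G) := by
  rw [IsLCD, Submodule.eq_bot_iff]
  rintro v ⟨hv, hv_dual⟩
  have hrowSpan : rowSpan F G = LinearMap.range G.vecMulLinear := (range_vecMulLinear G).symm
  obtain ⟨x, rfl⟩ := hrowSpan ▸ hv
  have hGv : G *ᵥ (x ᵥ* G) = 0 := by
    ext i
    rw [mulVec, dotProduct_comm]
    exact hv_dual (G i) (Submodule.subset_span ⟨i, rfl⟩)
  have hx : x = 0 := vecMul_injective_of_isUnit hG <| by
    change x ᵥ* (G * Gᵀ) = 0 ᵥ* (G * Gᵀ)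
    rw [← vecMul_vecMul, vecMul_transpose, hGv, zero_vecMul]
  simp [hx]

end LCD

theorem isUnit_smul_one_add_smul_allOnes {F ι : Type*} [Field F] [Fintype ι] [DecidableEq ι]
    {a c : F} (ha : a ≠ 0) (hac : a + Fintype.card ι * c ≠ 0) :
    IsUnit (a • (1 : Matrix ι ι F) + c • Matrix.of fun _ _ => 1) := by
  set J : Matrix ι ι F := Matrix.of fun _ _ => 1
  have hJJ : J * J = (Fintype.card ι : F) • J := by
    ext i j; simp [J, Matrix.mul_apply]
  refine (Matrix.isUnit_iff_isUnit_det _).2 <| Matrix.isUnit_det_of_right_inverse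
    (B := a⁻¹ • 1 - (c / (a * (a + Fintype.card ι * c))) • J) ?_
  simp only [add_mul, mul_sub, smul_mul_assoc, mul_smul_comm, one_mul, mul_one, hJJ, smul_smul]
  match_scalars
  · field_simp
  · rw [show a * 1 + c * Fintype.card ι * 1 = a + Fintype.card ι * c by ring,
      div_mul_eq_mul_div, mul_div_mul_right _ _ hac]
    ring

theorem fromCols_map_mul_transpose_eq_of_weighing_of_design {F ι β : Type*} [Field F]
    [Fintype ι] [DecidableEq ι] [Fintype β] {m r lam : ℕ} {W : Matrix ι ι ℤ} {B : Matrix ι β ℤ}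
    (hW : W * Wᵀ = (m : ℤ) • (1 : Matrix ι ι ℤ))
    (hB : B * Bᵀ = ((r : ℤ) - (lam : ℤ)) • (1 : Matrix ι ι ℤ) + Matrix.of fun _ _ => (lam : ℤ)) :
    let G := Matrix.fromCols (W.map (Int.cast : ℤ → F)) (B.map (Int.cast : ℤ → F))
    G * Gᵀ = ((r : F) - lam + m) • (1 : Matrix ι ι F) + (lam : F) • Matrix.of fun _ _ => 1 := by
  intro G
  have hGram : G * Gᵀ = (W * Wᵀ + B * Bᵀ).map (Int.castRingHom F) := by
    rw [transpose_fromCols, fromCols_mul_fromRows, Matrix.map_add _ (map_add _), Matrix.map_mul,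
      Matrix.map_mul, transpose_map, transpose_map]
    rfl
  rw [hGram, hW, hB]
  ext i j
  simp only [Matrix.map_apply, Matrix.add_apply, Matrix.smul_apply, of_apply, smul_eq_mul]
  rcases eq_or_ne i j with rfl | hij
  · simp only [one_apply_eq, eq_intCast]
    push_cast
    ring
  · simp [one_apply_ne hij]

theorem statement1_general {F : Type*} [Field F] {n b m r lam : ℕ}
    (W : Matrix (Fin n) (Fin n) ℤ)
    (hW : W * Wᵀ = (m : ℤ) • (1 : Matrix (Fin n) (Fin n) ℤ))
    (B : Matrix (Fin n) (Fin b) ℤ)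
    (hB : B * Bᵀ = ((r : ℤ) - (lam : ℤ)) • (1 : Matrix (Fin n) (Fin n) ℤ)
          + Matrix.of (fun _ _ => (lam : ℤ)))
    (h1 : (r : F) + ((n : F) - 1) * (lam : F) + (m : F) ≠ 0)
    (h2 : (r : F) - (lam : F) + (m : F) ≠ 0)
    (G : Matrix (Fin n) (Fin n ⊕ Fin b) F)
    (hG : G = Matrix.fromCols (W.map (Int.cast : ℤ → F)) (B.map (Int.cast : ℤ → F))) :
    IsLCD (rowSpan F G) ∧ Module.finrank F (rowSpan F G) = n := by
  have hunit : IsUnit (G * Gᵀ) := by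
    rw [hG, fromCols_map_mul_transpose_eq_of_weighing_of_design hW hB]
    refine isUnit_smul_one_add_smul_allOnes h2 ?_
    convert h1 using 1
    rw [Fintype.card_fin]
    ring
  exact ⟨isLCD_rowSpan_of_isUnit_mul_transpose hunit,
    (finrank_rowSpan_of_isUnit_mul_transpose hunit).trans (Fintype.card_fin n)⟩

/-- If `W` is a weighing matrix `W(n,m)`, `B` is the `n × b`
point-by-block incidence matrix of an `(r,λ)`-design on `n` points, and
`G = [W | B]` over the finite field `F`, then provided `r + (n-1)λ + m ≠ 0` and
`r - λ + m ≠ 0` in `F`, the matrix `G` generates an LCD code of length `n + b`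
and dimension `n` over `F`. -/
theorem statement1 {F : Type*} [Field F] [Fintype F] {n b m r lam : ℕ}
    (hr : 0 < r) (hlam : 0 < lam)
    (W : Matrix (Fin n) (Fin n) ℤ)
    (hWent : ∀ i j, W i j = 0 ∨ W i j = 1 ∨ W i j = -1)
    (hW : W * Wᵀ = (m : ℤ) • (1 : Matrix (Fin n) (Fin n) ℤ))
    (B : Matrix (Fin n) (Fin b) ℤ)
    (hBent : ∀ i j, B i j = 0 ∨ B i j = 1)
    (hB : B * Bᵀ = ((r : ℤ) - (lam : ℤ)) • (1 : Matrix (Fin n) (Fin n) ℤ)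
          + Matrix.of (fun _ _ => (lam : ℤ)))
    (h1 : (r : F) + ((n : F) - 1) * (lam : F) + (m : F) ≠ 0)
    (h2 : (r : F) - (lam : F) + (m : F) ≠ 0)
    (G : Matrix (Fin n) (Fin n ⊕ Fin b) F)
    (hG : G = Matrix.fromCols (W.map (Int.cast : ℤ → F)) (B.map (Int.cast : ℤ → F))) :
    IsLCD (rowSpan F G) ∧ Module.finrank F (rowSpan F G) = n :=
  statement1_general W hW B hB h1 h2 G hG
end

section
/- Let M be an n×n matrix over F_q, let α ∈ F_q with α ≠ 0, and suppose G = [M|I_n] generates a code C of dimension n and length 2n over F_q, while Ḡ = [M|α·I_n] generates the dual code C⊥. Then C is formally self-dual: for every integer w with 0 ≤ w ≤ 2n, the number of codewords of Hamming weight w in C equals the number of codewords of Hamming weight w in C⊥. -/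
open Matrix BigOperators

/-!
The generator matrix `[M | α I]` of `C⊥` is `[M | I]` followed by the diagonal scaling
`diag(1, …, 1, α, …, α)`. Scaling coordinates by nonzero constants is an injective linear map
that preserves Hamming weight, so it carries the codewords of `C` of weight `w` bijectively
onto those of `C⊥`.
-/

theorem rowSpan_mul {F : Type*} [Field F] {k ι κ : Type*} [Fintype ι]
    (G : Matrix k ι F) (A : Matrix ι κ F) :
    rowSpan F (G * A) = (rowSpan F G).map Aᵀ.mulVecLin := by
  rw [rowSpan, rowSpan, Submodule.map_span, ← Set.range_comp]
  congr 2
  funext i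
  simp only [Function.comp_apply, mulVecLin_apply, mulVec_transpose]
  rfl

section DiagonalScaling

variable {ι F : Type*} [Fintype ι] [DecidableEq ι] [Field F] {d : ι → F}

theorem diagonal_mulVec_injective (hd : ∀ i, d i ≠ 0) :
    Function.Injective (diagonal d *ᵥ ·) := fun v u h =>
  funext fun i => mul_left_cancel₀ (hd i) (by simpa [mulVec_diagonal] using congrFun h i)

theorem hammingNorm_diagonal_mulVec [DecidableEq F] (hd : ∀ i, d i ≠ 0) (v : ι → F) :
    hammingNorm (diagonal d *ᵥ v) = hammingNorm v := by
  simp [hammingNorm, mulVec_diagonal, hd]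

theorem ncard_weight_image_diagonal_mulVec [DecidableEq F] (hd : ∀ i, d i ≠ 0)
    (S : Set (ι → F)) (w : ℕ) :
    {c ∈ (diagonal d *ᵥ ·) '' S | hammingNorm c = w}.ncard =
      {c ∈ S | hammingNorm c = w}.ncard := by
  have himage : {c ∈ (diagonal d *ᵥ ·) '' S | hammingNorm c = w} =
      (diagonal d *ᵥ ·) '' {c ∈ S | hammingNorm c = w} := by
    ext v
    simp only [Set.mem_ofPred_eq, Set.mem_image]
    constructor
    · rintro ⟨⟨c, hc, rfl⟩, hw⟩
      exact ⟨c, ⟨hc, by rwa [hammingNorm_diagonal_mulVec hd] at hw⟩, rfl⟩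
    · rintro ⟨c, ⟨hc, hw⟩, rfl⟩
      exact ⟨⟨c, hc, rfl⟩, by rwa [hammingNorm_diagonal_mulVec hd]⟩
  rw [himage, Set.ncard_image_of_injective _ (diagonal_mulVec_injective hd)]

end DiagonalScaling

theorem fromCols_one_mul_diagonal {F m n : Type*} [Field F] [Fintype m] [DecidableEq m]
    [Fintype n] [DecidableEq n] (M : Matrix m n F) (α : F) :
    fromCols M (1 : Matrix m m F) *
        (diagonal (Sum.elim 1 fun _ => α) : Matrix (n ⊕ m) (n ⊕ m) F) = fromCols M (α • 1) := by
  ext i (j | j) <;> simp [mul_diagonal, one_apply, mul_comm]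

theorem statement2_general {F : Type*} [Field F] [DecidableEq F] {n : ℕ}
    (M : Matrix (Fin n) (Fin n) F) (α : F) (hα : α ≠ 0)
    (G Gbar : Matrix (Fin n) (Fin n ⊕ Fin n) F)
    (hG : G = Matrix.fromCols M (1 : Matrix (Fin n) (Fin n) F))
    (hGbar : Gbar = Matrix.fromCols M (α • (1 : Matrix (Fin n) (Fin n) F)))
    (hdual : rowSpan F Gbar = dualCode (rowSpan F G)) :
    ∀ w : ℕ, w ≤ 2 * n →
      {c ∈ (rowSpan F G : Set ((Fin n ⊕ Fin n) → F)) | hammingNorm c = w}.ncard =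
      {c ∈ (dualCode (rowSpan F G) : Set ((Fin n ⊕ Fin n) → F)) | hammingNorm c = w}.ncard := by
  intro w _
  have hd : ∀ i : Fin n ⊕ Fin n, Sum.elim (1 : Fin n → F) (fun _ => α) i ≠ 0 := by
    rintro (i | i) <;> simp [hα]
  rw [← hdual, hGbar, ← fromCols_one_mul_diagonal, ← hG, rowSpan_mul, diagonal_transpose,
    Submodule.map_coe, coe_mulVecLin, ncard_weight_image_diagonal_mulVec hd]

/-- Let `M` be an `n × n` matrix over the finite field `F`, `α ≠ 0`,
and suppose `G = [M | I_n]` generates a code `C` of dimension `n` (and length `2n`),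
while `Ḡ = [M | α·I_n]` generates the dual code `C⊥`.  Then `C` is formally self-dual:
for every `w` with `0 ≤ w ≤ 2n`, the number of codewords of Hamming weight `w` in `C`
equals the number of codewords of Hamming weight `w` in `C⊥`. -/
theorem statement2 {F : Type*} [Field F] [Fintype F] [DecidableEq F] {n : ℕ}
    (M : Matrix (Fin n) (Fin n) F) (α : F) (hα : α ≠ 0)
    (G Gbar : Matrix (Fin n) (Fin n ⊕ Fin n) F)
    (hG : G = Matrix.fromCols M (1 : Matrix (Fin n) (Fin n) F))
    (hGbar : Gbar = Matrix.fromCols M (α • (1 : Matrix (Fin n) (Fin n) F)))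
    (hdim : Module.finrank F (rowSpan F G) = n)
    (hdual : rowSpan F Gbar = dualCode (rowSpan F G)) :
    ∀ w : ℕ, w ≤ 2 * n →
      {c ∈ (rowSpan F G : Set ((Fin n ⊕ Fin n) → F)) | hammingNorm c = w}.ncard =
      {c ∈ (dualCode (rowSpan F G) : Set ((Fin n ⊕ Fin n) → F)) | hammingNorm c = w}.ncard :=
  statement2_general M α hα G Gbar hG hGbar hdual
end

section
/- Let W be a weighing matrix W(n,m), let C be the code over F_q generated by G = [W|I_n], and suppose m ≠ 0 in F_q. Let α ∈ F_q satisfy α + m = 0 in F_q. Then the matrix Ḡ = [W|α·I_n] generates the dual code C⊥, i.e., the row span of Ḡ equals C⊥. -/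
open Matrix BigOperators

/-!
Over `F` the Gram matrix `[W | I] [W | αI]ᵀ = W Wᵀ + α I = (m + α) I` vanishes, so the rows of
`Ḡ` lie in `C⊥`. Both generators contain an invertible `n × n` block (`I` and `α I`, as `α = -m ≠ 0`),
so both have rank `n`, and `C⊥` has dimension `2n - n = n`.
-/

section LinearCode

variable {F : Type*} [Field F] {k ι : Type*} [Fintype ι]

theorem dualCode_rowSpan_eq_ker (G : Matrix k ι F) :
    dualCode (rowSpan F G) = LinearMap.ker G.mulVecLin := by
  ext v
  simp only [dualCode, rowSpan, Submodule.mem_mk, AddSubmonoid.mem_mk, AddSubsemigroup.mem_mk,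
    Set.mem_ofPred_eq, LinearMap.mem_ker, mulVecLin_apply, funext_iff, mulVec, Pi.zero_apply]
  constructor
  · intro hv i
    rw [dotProduct_comm]
    exact hv _ (Submodule.subset_span ⟨i, rfl⟩)
  · intro hv c hc
    induction hc using Submodule.span_induction with
    | mem x hx =>
      obtain ⟨i, rfl⟩ := hx
      rw [dotProduct_comm, hv i]
    | zero => exact dotProduct_zero v
    | add x y _ _ hx hy => rw [dotProduct_add, hx, hy, add_zero]
    | smul r x _ hx => rw [dotProduct_smul, hx, smul_zero]

theorem finrank_rowSpan [Finite k] (G : Matrix k ι F) :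
    Module.finrank F (rowSpan F G) = G.rank :=
  G.rank_eq_finrank_span_row.symm

theorem rowSpan_eq_dualCode_of_mul_transpose_eq_zero {k' : Type*} [Fintype k] [Fintype k']
    {G : Matrix k ι F} {H : Matrix k' ι F} (hGH : G * Hᵀ = 0)
    (hrank : G.rank + H.rank = Fintype.card ι) :
    rowSpan F H = dualCode (rowSpan F G) := by
  rw [dualCode_rowSpan_eq_ker]
  have hle : rowSpan F H ≤ LinearMap.ker G.mulVecLin := by
    refine Submodule.span_le.mpr ?_
    rintro _ ⟨j, rfl⟩
    ext i
    simpa [mulVec, Matrix.mul_apply, dotProduct] using congrFun (congrFun hGH i) j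
  refine Submodule.eq_of_le_of_finrank_le hle ?_
  have hrankNullity := G.mulVecLin.finrank_range_add_finrank_ker
  rw [Module.finrank_fintype_fun_eq_card] at hrankNullity
  rw [finrank_rowSpan]
  change G.rank + _ = _ at hrankNullity
  omega

end LinearCode

theorem rank_fromCols_of_isUnit {R : Type*} [CommSemiring R] [StrongRankCondition R]
    {m n : Type*} [Fintype m] [Fintype n] [DecidableEq m] (A : Matrix m n R) {B : Matrix m m R} (hB : IsUnit B) :
    (fromCols A B).rank = Fintype.card m := by
  refine le_antisymm (rank_le_card_height _) ?_
  calc Fintype.card m = B.rank := (rank_of_isUnit B hB).symm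
    _ = (fromCols A B * fromRows (0 : Matrix n m R) (1 : Matrix m m R)).rank := by
      rw [fromCols_mul_fromRows, Matrix.mul_zero, zero_add, Matrix.mul_one]
    _ ≤ (fromCols A B).rank := rank_mul_le_left _ _

theorem map_intCast_mul_transpose {R : Type*} [Ring R] {n : Type*} [Fintype n] [DecidableEq n]
    {W : Matrix n n ℤ} {c : ℤ} (hW : W * Wᵀ = c • 1) :
    W.map (Int.cast : ℤ → R) * (W.map Int.cast)ᵀ = (c : R) • 1 := by
  rw [smul_one_eq_diagonal] at hW ⊢
  have := congrArg (Int.castRingHom R).mapMatrix hW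
  rwa [map_mul, RingHom.mapMatrix_apply, RingHom.mapMatrix_apply, RingHom.mapMatrix_apply,
    diagonal_map (map_zero _), transpose_map, Int.coe_castRingHom] at this

theorem statement5_general {F : Type*} [Field F] {n m : ℕ}
    (W : Matrix (Fin n) (Fin n) ℤ)
    (hW : W * Wᵀ = (m : ℤ) • (1 : Matrix (Fin n) (Fin n) ℤ))
    (hm : (m : F) ≠ 0) (α : F) (hα : α + (m : F) = 0)
    (G Gbar : Matrix (Fin n) (Fin n ⊕ Fin n) F)
    (hG : G = Matrix.fromCols (W.map (Int.cast : ℤ → F)) (1 : Matrix (Fin n) (Fin n) F))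
    (hGbar : Gbar = Matrix.fromCols (W.map (Int.cast : ℤ → F)) (α • (1 : Matrix (Fin n) (Fin n) F))) :
    rowSpan F Gbar = dualCode (rowSpan F G) := by
  subst hG hGbar
  have hα0 : α ≠ 0 := by
    rintro rfl
    exact hm (by simpa using hα)
  apply rowSpan_eq_dualCode_of_mul_transpose_eq_zero
  · rw [transpose_fromCols, fromCols_mul_fromRows, map_intCast_mul_transpose hW, transpose_smul,
      transpose_one, Matrix.one_mul, Int.cast_natCast, ← add_smul, add_comm, hα, zero_smul]
  · have hαunit : IsUnit (α • 1 : Matrix (Fin n) (Fin n) F) :=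
      isUnit_one.smul (Units.mk0 α hα0)
    rw [rank_fromCols_of_isUnit _ isUnit_one, rank_fromCols_of_isUnit _ hαunit]
    simp

/-- Let `W` be a weighing matrix `W(n,m)`, let `C` be the code over the
finite field `F` generated by `G = [W | I_n]`, suppose `m ≠ 0` in `F` and let `α ∈ F`
satisfy `α + m = 0`.  Then `Ḡ = [W | α·I_n]` generates the dual code `C⊥`. -/
theorem statement5 {F : Type*} [Field F] [Fintype F] {n m : ℕ}
    (W : Matrix (Fin n) (Fin n) ℤ)
    (hWent : ∀ i j, W i j = 0 ∨ W i j = 1 ∨ W i j = -1)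
    (hW : W * Wᵀ = (m : ℤ) • (1 : Matrix (Fin n) (Fin n) ℤ))
    (hm : (m : F) ≠ 0) (α : F) (hα : α + (m : F) = 0)
    (G Gbar : Matrix (Fin n) (Fin n ⊕ Fin n) F)
    (hG : G = Matrix.fromCols (W.map (Int.cast : ℤ → F)) (1 : Matrix (Fin n) (Fin n) F))
    (hGbar : Gbar = Matrix.fromCols (W.map (Int.cast : ℤ → F)) (α • (1 : Matrix (Fin n) (Fin n) F))) :
    rowSpan F Gbar = dualCode (rowSpan F G) :=
  statement5_general W hW hm α hα G Gbar hG hGbar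
end

section
/- Let W be a weighing matrix W(n,m) with m + 1 ≠ 0 and m ≠ 0 in F_q, let C be the code over F_q generated by G = [W|I_n] with rows r_1,…,r_n, and let Ḡ = [W|(−m)·I_n] have rows r̄_1,…,r̄_n. Let d be the minimum Hamming weight of a nonzero codeword of C and t = ⌊(d−1)/2⌋. Let J ⊆ {1,…,n} with |J| ≤ t and let λ_i ∈ F_q with λ_i ≠ 0 for each i ∈ J. Then the Hamming distance between Σ_{i∈J} λ_i·r̄_i and Σ_{i∈J} λ_i·r_i equals |J|, and every codeword c ∈ C with c ≠ Σ_{i∈J} λ_i·r_i satisfies hammingDist(c, Σ_{i∈J} λ_i·r̄_i) > |J|; that is, Σ_{i∈J} λ_i·r_i is the unique codeword of C closest to Σ_{i∈J} λ_i·r̄_i. -/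
open Matrix BigOperators

/-!
The word `∑ λᵢ r̄ᵢ` differs from the codeword `∑ λᵢ rᵢ` only in the identity block, where the
entries are `-m λᵢ` and `λᵢ`; since `-m ≠ 1` they differ exactly at the `|J|` positions of `J`.
Distinct codewords of a linear code are at distance at least `d`, so with `|J| ≤ ⌊(d-1)/2⌋` the
triangle inequality makes `∑ λᵢ rᵢ` strictly nearer than any other codeword.
-/

section Hamming

variable {ι κ β : Type*} [Fintype ι] [Fintype κ] [DecidableEq β]

theorem hammingDist_sumElim (a a' : ι → β) (b b' : κ → β) :
    hammingDist (Sum.elim a b) (Sum.elim a' b') = hammingDist a a' + hammingDist b b' := by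
  simp only [hammingDist, ← Finset.card_disjSum]
  congr 1
  ext (i | i) <;> simp

theorem hammingDist_smul_self {R : Type*} [Ring R] [NoZeroDivisors R] [DecidableEq R]
    {k : R} (hk : k ≠ 1) (v : ι → R) : hammingDist (k • v) v = hammingNorm v := by
  have hk' : k - 1 ≠ 0 := sub_ne_zero.mpr hk
  unfold hammingDist hammingNorm
  congr 1
  ext i
  simp only [Finset.mem_filter, Finset.mem_univ, true_and, Pi.smul_apply, smul_eq_mul, ne_eq]
  rw [← sub_eq_zero, ← sub_one_mul, mul_eq_zero, or_iff_right hk']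

theorem hammingDist_lt_of_le_half {x y c : ι → β} {d : ℕ} (hcx : c ≠ x)
    (hd : d ≤ hammingDist c x) (hy : hammingDist y x ≤ (d - 1) / 2) :
    hammingDist y x < hammingDist c y := by
  have hpos := hammingDist_pos.mpr hcx
  have htri := hammingDist_triangle c y x
  omega

theorem Submodule.le_hammingDist {R M : Type*} [Ring R] [AddCommGroup M] [Module R M]
    [DecidableEq M] {C : Submodule R (ι → M)} {d : ℕ}
    (hd : d ∈ lowerBounds {w | ∃ c ∈ C, c ≠ 0 ∧ hammingNorm c = w})
    {c₁ c₂ : ι → M} (h₁ : c₁ ∈ C) (h₂ : c₂ ∈ C) (hne : c₁ ≠ c₂) :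
    d ≤ hammingDist c₁ c₂ :=
  hd ⟨c₁ - c₂, C.sub_mem h₁ h₂, sub_ne_zero.mpr hne, by
    rw [hammingDist_comm, hammingDist_eq_hammingNorm, neg_add_eq_sub]⟩

end Hamming

section Rows

variable {ι κ R : Type*} [Semiring R]

theorem Matrix.sum_smul_fromCols_row (J : Finset ι) (lam : ι → R) (A : Matrix ι κ R)
    (B : Matrix ι ι R) :
    ∑ i ∈ J, lam i • fromCols A B i = Sum.elim (∑ i ∈ J, lam i • A i) (∑ i ∈ J, lam i • B i) := by
  ext (j | j) <;> simp [Finset.sum_apply]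

theorem Matrix.hammingNorm_sum_smul_one_row [Fintype ι] [DecidableEq ι] [DecidableEq R]
    {J : Finset ι} {lam : ι → R} (hlam : ∀ i ∈ J, lam i ≠ 0) :
    hammingNorm (∑ i ∈ J, lam i • (1 : Matrix ι ι R) i) = J.card := by
  have happly (j : ι) :
      (∑ i ∈ J, lam i • (1 : Matrix ι ι R) i) j = if j ∈ J then lam j else 0 := by
    simp [Finset.sum_apply, Matrix.one_apply]
  unfold hammingNorm
  congr 1
  ext j
  by_cases hj : j ∈ J <;> simp [happly, hj, hlam]

end Rows

theorem statement6_general {F : Type*} [Field F] [DecidableEq F] {n m : ℕ}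
    (W : Matrix (Fin n) (Fin n) ℤ)
    (hm1 : (m : F) + 1 ≠ 0)
    (G Gbar : Matrix (Fin n) (Fin n ⊕ Fin n) F)
    (hG : G = Matrix.fromCols (W.map (Int.cast : ℤ → F)) (1 : Matrix (Fin n) (Fin n) F))
    (hGbar : Gbar = Matrix.fromCols (W.map (Int.cast : ℤ → F))
      ((-(m : F)) • (1 : Matrix (Fin n) (Fin n) F)))
    (d : ℕ)
    (hd : IsLeast {w : ℕ | ∃ c ∈ rowSpan F G, c ≠ 0 ∧ hammingNorm c = w} d)
    (J : Finset (Fin n)) (hJ : J.card ≤ (d - 1) / 2)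
    (lam : Fin n → F) (hlam : ∀ i ∈ J, lam i ≠ 0) :
    hammingDist (∑ i ∈ J, lam i • Gbar i) (∑ i ∈ J, lam i • G i) = J.card ∧
    ∀ c ∈ rowSpan F G, c ≠ ∑ i ∈ J, lam i • G i →
      J.card < hammingDist c (∑ i ∈ J, lam i • Gbar i) := by
  set v := ∑ i ∈ J, lam i • (1 : Matrix (Fin n) (Fin n) F) i
  have hv := Matrix.hammingNorm_sum_smul_one_row hlam
  have hsmul :
      ∑ i ∈ J, lam i • ((-(m : F)) • (1 : Matrix (Fin n) (Fin n) F)) i = (-(m : F)) • v := by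
    rw [Finset.smul_sum]
    exact Finset.sum_congr rfl fun i _ => smul_comm (lam i) (-(m : F)) _
  have hm1' : -(m : F) ≠ 1 := fun h => hm1 (by rw [neg_eq_iff_eq_neg.mp h, neg_add_cancel])
  have hdist : hammingDist (∑ i ∈ J, lam i • Gbar i) (∑ i ∈ J, lam i • G i) = J.card := by
    rw [hG, hGbar, sum_smul_fromCols_row, sum_smul_fromCols_row, hsmul, hammingDist_sumElim,
      hammingDist_self, zero_add, hammingDist_smul_self hm1', hv]
  have hx : ∑ i ∈ J, lam i • G i ∈ rowSpan F G :=
    Submodule.sum_mem _ fun i _ => Submodule.smul_mem _ _ (Submodule.subset_span ⟨i, rfl⟩)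
  refine ⟨hdist, fun c hc hcx => ?_⟩
  rw [← hdist] at hJ ⊢
  exact hammingDist_lt_of_le_half hcx (Submodule.le_hammingDist hd.2 hc hx hcx) hJ

/-- With `W` a weighing matrix `W(n,m)`, `m + 1 ≠ 0` and `m ≠ 0` in the
finite field `F`, `C` the code generated by `G = [W | I_n]` with rows `r_i`, and
`Ḡ = [W | (-m)·I_n]` with rows `r̄_i`: if `d` is the minimum weight of a nonzero codeword
of `C`, `t = ⌊(d-1)/2⌋`, `J` has at most `t` elements and `λ_i ≠ 0` for `i ∈ J`, then
`Σ_{i∈J} λ_i·r_i` is at Hamming distance `|J|` from `Σ_{i∈J} λ_i·r̄_i`, and every other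
codeword of `C` is at distance greater than `|J|` from `Σ_{i∈J} λ_i·r̄_i`. -/
theorem statement6 {F : Type*} [Field F] [Fintype F] [DecidableEq F] {n m : ℕ}
    (W : Matrix (Fin n) (Fin n) ℤ)
    (hWent : ∀ i j, W i j = 0 ∨ W i j = 1 ∨ W i j = -1)
    (hW : W * Wᵀ = (m : ℤ) • (1 : Matrix (Fin n) (Fin n) ℤ))
    (hm1 : (m : F) + 1 ≠ 0) (hm : (m : F) ≠ 0)
    (G Gbar : Matrix (Fin n) (Fin n ⊕ Fin n) F)
    (hG : G = Matrix.fromCols (W.map (Int.cast : ℤ → F)) (1 : Matrix (Fin n) (Fin n) F))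
    (hGbar : Gbar = Matrix.fromCols (W.map (Int.cast : ℤ → F))
      ((-(m : F)) • (1 : Matrix (Fin n) (Fin n) F)))
    (d : ℕ)
    (hd : IsLeast {w : ℕ | ∃ c ∈ rowSpan F G, c ≠ 0 ∧ hammingNorm c = w} d)
    (J : Finset (Fin n)) (hJ : J.card ≤ (d - 1) / 2)
    (lam : Fin n → F) (hlam : ∀ i ∈ J, lam i ≠ 0) :
    hammingDist (∑ i ∈ J, lam i • Gbar i) (∑ i ∈ J, lam i • G i) = J.card ∧
    ∀ c ∈ rowSpan F G, c ≠ ∑ i ∈ J, lam i • G i →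
      J.card < hammingDist c (∑ i ∈ J, lam i • Gbar i) :=
  statement6_general W hm1 G Gbar hG hGbar d hd J hJ lam hlam
end

section
/- Let W be a skew-weighing matrix W(n,m), let B be an n×b point-by-block incidence matrix of an (r,λ)-design on n points, let α ∈ F_q, and let G = [W + α·I_n | B] over F_q (entries of W and B reduced modulo p). If (m + α² + r + (n−1)λ) ≠ 0 and (m + α² + r − λ) ≠ 0 in F_q, then G generates an LCD code C of length n+b and dimension n over F_q. -/
open Matrix BigOperators

/-!
An LCD criterion in the spirit of Massey: if the Gram matrix `G Gᵀ` has trivial left kernel,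
then `x = c G` lying in the dual of the row span forces `c (G Gᵀ) = 0`, hence `x = 0`, and the
rows of `G` are independent. For `G = [W + α I | B]` the cross terms `α (W + Wᵀ)` vanish by
skewness, so `G Gᵀ = (m + α² + r - λ) I + λ J`, whose left kernel is trivial under the two
conditions: summing the coordinates of `c (a I + λ J)` gives `(a + nλ) ∑ c`.
-/

section RowSpan

variable {F : Type*} [Field F] {k ι : Type*} [Fintype k]

theorem rowSpan_eq_range_vecMulLinear (G : Matrix k ι F) :
    rowSpan F G = LinearMap.range G.vecMulLinear :=
  (range_vecMulLinear G).symm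

variable [Fintype ι]

theorem vecMul_mul_transpose_apply (G : Matrix k ι F) (c : k → F) (i : k) :
    (c ᵥ* (G * Gᵀ)) i = (c ᵥ* G) ⬝ᵥ G i := by
  rw [← vecMul_vecMul, vecMul_transpose, mulVec, dotProduct_comm]

variable {G : Matrix k ι F}

theorem isLCD_rowSpan_of_vecMul_mul_transpose (hG : ∀ c, c ᵥ* (G * Gᵀ) = 0 → c = 0) :
    IsLCD (rowSpan F G) := by
  refine eq_bot_iff.mpr fun x hx => ?_
  obtain ⟨hrow, hdual⟩ := Submodule.mem_inf.mp hx
  obtain ⟨c, rfl⟩ := (rowSpan_eq_range_vecMulLinear G ▸ hrow : x ∈ LinearMap.range _)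
  have hc : c ᵥ* (G * Gᵀ) = 0 := funext fun i => by
    rw [vecMul_mul_transpose_apply]
    exact hdual _ (Submodule.subset_span ⟨i, rfl⟩)
  simp [hG c hc]

theorem finrank_rowSpan_of_vecMul_mul_transpose (hG : ∀ c, c ᵥ* (G * Gᵀ) = 0 → c = 0) :
    Module.finrank F (rowSpan F G) = Fintype.card k := by
  have hinj : Function.Injective G.vecMulLinear := by
    refine (injective_iff_map_eq_zero _).mpr fun c hc => hG c ?_
    rw [← vecMul_vecMul, show c ᵥ* G = 0 from hc, zero_vecMul]
  rw [rowSpan_eq_range_vecMulLinear, LinearMap.finrank_range_of_inj hinj,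
    Module.finrank_fintype_fun_eq_card]

end RowSpan

theorem eq_zero_of_vecMul_smul_one_add_const {K : Type*} [Field K] {k : Type*} [Fintype k]
    [DecidableEq k] {a L : K} (ha : a ≠ 0) (haL : a + Fintype.card k * L ≠ 0) {c : k → K}
    (hc : c ᵥ* (a • (1 : Matrix k k K) + of fun _ _ => L) = 0) : c = 0 := by
  have hcj : ∀ j, a * c j + L * ∑ i, c i = 0 := fun j => by
    have := congrFun hc j
    rw [vecMul_add, vecMul_smul, vecMul_one] at this
    simpa [vecMul, dotProduct, Finset.mul_sum, mul_comm] using this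
  have hsum : ∑ i, c i = 0 := by
    have := Finset.sum_congr rfl fun j (_ : j ∈ Finset.univ) => hcj j
    simp only [Finset.sum_add_distrib, ← Finset.mul_sum, Finset.sum_const, Finset.card_univ,
      nsmul_eq_mul] at this
    exact (mul_eq_zero.mp (by linear_combination this)).resolve_left haL
  funext j
  simpa [hsum, ha] using hcj j

section SkewWeighingDesign

variable {R : Type*} [CommRing R] {k l : Type*} [Fintype l]

theorem fromCols_mul_transpose_fromCols [Fintype k] (A : Matrix k k R) (B : Matrix k l R) :
    fromCols A B * (fromCols A B)ᵀ = A * Aᵀ + B * Bᵀ := by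
  rw [transpose_fromCols, fromCols_mul_fromRows]

theorem intCast_map_mul_transpose (M : Matrix k l ℤ) :
    M.map (Int.cast : ℤ → R) * (M.map (Int.cast : ℤ → R))ᵀ = (M * Mᵀ).map Int.cast := by
  rw [← transpose_map]
  exact (Matrix.map_mul (f := Int.castRingHom R)).symm

variable [Fintype k] [DecidableEq k]

theorem add_smul_one_mul_transpose_of_skew {W : Matrix k k R} {m : R} (hskew : Wᵀ = -W)
    (hW : W * Wᵀ = m • 1) (α : R) :
    (W + α • 1) * (W + α • 1)ᵀ = (m + α ^ 2) • 1 := by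
  rw [transpose_add, transpose_smul, transpose_one, add_mul, mul_add, mul_add, hW, hskew]
  simp only [Matrix.smul_mul, Matrix.mul_smul, Matrix.one_mul, Matrix.mul_one, Matrix.mul_neg,
    smul_smul, add_smul, sq]
  abel

def skewWeighingDesignMatrix (W : Matrix k k ℤ) (B : Matrix k l ℤ) (α : R) :
    Matrix k (k ⊕ l) R :=
  fromCols (W.map Int.cast + α • 1) (B.map Int.cast)

theorem skewWeighingDesignMatrix_mul_transpose {W : Matrix k k ℤ} {B : Matrix k l ℤ}
    {m r lam : ℕ} (hW : W * Wᵀ = (m : ℤ) • (1 : Matrix k k ℤ)) (hskew : Wᵀ = -W)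
    (hB : B * Bᵀ = ((r : ℤ) - (lam : ℤ)) • (1 : Matrix k k ℤ) + of fun _ _ => (lam : ℤ))
    (α : R) :
    skewWeighingDesignMatrix W B α * (skewWeighingDesignMatrix W B α)ᵀ
      = ((m : R) + α ^ 2 + r - lam) • 1 + of fun _ _ => (lam : R) := by
  have hskewR : (W.map (Int.cast : ℤ → R))ᵀ = -W.map Int.cast := by
    rw [← transpose_map, hskew]
    ext i j
    simp
  have hWR : W.map (Int.cast : ℤ → R) * (W.map Int.cast)ᵀ = (m : R) • 1 := by
    refine (intCast_map_mul_transpose W).trans ?_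
    rw [hW]
    ext i j
    simp only [map_apply, Matrix.smul_apply, one_apply, smul_eq_mul]
    split_ifs <;> push_cast <;> ring
  rw [skewWeighingDesignMatrix, fromCols_mul_transpose_fromCols,
    add_smul_one_mul_transpose_of_skew hskewR hWR, intCast_map_mul_transpose, hB]
  ext i j
  simp only [Matrix.add_apply, map_apply, Matrix.smul_apply, one_apply, of_apply, smul_eq_mul]
  split_ifs <;> push_cast <;> ring

end SkewWeighingDesign

theorem statement7_general {F : Type*} [Field F] {n b m r lam : ℕ}
    (W : Matrix (Fin n) (Fin n) ℤ)
    (hW : W * Wᵀ = (m : ℤ) • (1 : Matrix (Fin n) (Fin n) ℤ))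
    (hskew : Wᵀ = -W)
    (B : Matrix (Fin n) (Fin b) ℤ)
    (hB : B * Bᵀ = ((r : ℤ) - (lam : ℤ)) • (1 : Matrix (Fin n) (Fin n) ℤ)
          + Matrix.of (fun _ _ => (lam : ℤ)))
    (α : F)
    (h1 : (m : F) + α ^ 2 + (r : F) + ((n : F) - 1) * (lam : F) ≠ 0)
    (h2 : (m : F) + α ^ 2 + (r : F) - (lam : F) ≠ 0)
    (G : Matrix (Fin n) (Fin n ⊕ Fin b) F)
    (hG : G = Matrix.fromCols
      (W.map (Int.cast : ℤ → F) + α • (1 : Matrix (Fin n) (Fin n) F))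
      (B.map (Int.cast : ℤ → F))) :
    IsLCD (rowSpan F G) ∧ Module.finrank F (rowSpan F G) = n := by
  have hgram : G * Gᵀ = ((m : F) + α ^ 2 + r - lam) • 1 + of fun _ _ => (lam : F) := by
    rw [hG]
    exact skewWeighingDesignMatrix_mul_transpose hW hskew hB α
  have hker : ∀ c, c ᵥ* (G * Gᵀ) = 0 → c = 0 := fun c hc =>
    eq_zero_of_vecMul_smul_one_add_const h2
      (by rw [Fintype.card_fin]; convert h1 using 1; ring) (hgram ▸ hc)
  refine ⟨isLCD_rowSpan_of_vecMul_mul_transpose hker, ?_⟩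
  rw [finrank_rowSpan_of_vecMul_mul_transpose hker, Fintype.card_fin]

/-- If `W` is a skew-weighing matrix `W(n,m)`, `B` is the `n × b`
point-by-block incidence matrix of an `(r,λ)`-design on `n` points, `α ∈ F`, and
`G = [W + α·I_n | B]` over the finite field `F`, then provided
`m + α² + r + (n-1)λ ≠ 0` and `m + α² + r - λ ≠ 0` in `F`, the matrix `G` generates
an LCD code of length `n + b` and dimension `n` over `F`. -/
theorem statement7 {F : Type*} [Field F] [Fintype F] {n b m r lam : ℕ}
    (hr : 0 < r) (hlam : 0 < lam)
    (W : Matrix (Fin n) (Fin n) ℤ)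
    (hWent : ∀ i j, W i j = 0 ∨ W i j = 1 ∨ W i j = -1)
    (hW : W * Wᵀ = (m : ℤ) • (1 : Matrix (Fin n) (Fin n) ℤ))
    (hskew : Wᵀ = -W)
    (B : Matrix (Fin n) (Fin b) ℤ)
    (hBent : ∀ i j, B i j = 0 ∨ B i j = 1)
    (hB : B * Bᵀ = ((r : ℤ) - (lam : ℤ)) • (1 : Matrix (Fin n) (Fin n) ℤ)
          + Matrix.of (fun _ _ => (lam : ℤ)))
    (α : F)
    (h1 : (m : F) + α ^ 2 + (r : F) + ((n : F) - 1) * (lam : F) ≠ 0)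
    (h2 : (m : F) + α ^ 2 + (r : F) - (lam : F) ≠ 0)
    (G : Matrix (Fin n) (Fin n ⊕ Fin b) F)
    (hG : G = Matrix.fromCols
      (W.map (Int.cast : ℤ → F) + α • (1 : Matrix (Fin n) (Fin n) F))
      (B.map (Int.cast : ℤ → F))) :
    IsLCD (rowSpan F G) ∧ Module.finrank F (rowSpan F G) = n :=
  statement7_general W hW hskew B hB α h1 h2 G hG
end

section
/- Let M be a nonsingular n×n matrix over a field F, let N = (M⁻¹)ᵀ, and let G be a group of permutation automorphisms of M, with row orbits R_1,…,R_t and column orbits C_1,…,C_{t′}. Fix row indices x ∈ R_i and x′ ∈ R_s, and for each j fix a column index y_j ∈ C_j. Then Σ_{j=1}^{t′} (Σ_{z∈C_j} M_{x,z})·(Σ_{w∈R_s} N_{w,y_j}) equals 1 if i = s and equals 0 otherwise. -/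
/-!
Since `M (M⁻¹) = 1`, the sum `∑_z M x z · ∑_{w ∈ R s} (M⁻¹)ᵀ w z` is the indicator of
`x ∈ R s`, i.e. `δ_{i s}`. The group `G` also preserves `(M⁻¹)ᵀ`, and it maps the row orbit
`R s` onto itself, so `z ↦ ∑_{w ∈ R s} (M⁻¹)ᵀ w z` is constant on every column orbit `C j`.
Grouping the sum over `z` by column orbits therefore gives the left-hand side.
-/

open Matrix BigOperators

/-- `(σ, τ)` is a permutation automorphism of the square matrix `M` if permuting the rows
by `σ` and the columns by `τ` leaves `M` unchanged, i.e. `M (σ i) (τ j) = M i j`. -/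
def IsPermAut {n : ℕ} {R : Type*} (M : Matrix (Fin n) (Fin n) R)
    (g : Equiv.Perm (Fin n) × Equiv.Perm (Fin n)) : Prop :=
  ∀ i j, M (g.1 i) (g.2 j) = M i j

open Finset

theorem IsPermAut.submatrix_eq {n : ℕ} {R : Type*} {M : Matrix (Fin n) (Fin n) R}
    {g : Equiv.Perm (Fin n) × Equiv.Perm (Fin n)} (h : IsPermAut M g) :
    M.submatrix g.1 g.2 = M :=
  Matrix.ext h

theorem IsPermAut.inv_transpose {n : ℕ} {R : Type*} [CommRing R] {M : Matrix (Fin n) (Fin n) R}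
    {g : Equiv.Perm (Fin n) × Equiv.Perm (Fin n)} (h : IsPermAut M g) :
    IsPermAut (M⁻¹)ᵀ g := fun i j => by
  conv_rhs => rw [transpose_apply, ← h.submatrix_eq, inv_submatrix_equiv]
  rfl

theorem Finset.sum_comp_perm_of_mapsTo {ι M : Type*} [AddCommMonoid M] {s : Finset ι}
    {σ : Equiv.Perm ι} (h : ∀ a ∈ s, σ a ∈ s) (f : ι → M) :
    ∑ a ∈ s, f (σ a) = ∑ a ∈ s, f a :=
  have hbij := (s.finite_toSet.injOn_iff_bijOn_of_mapsTo h).mp σ.injective.injOn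
  sum_nbij σ h hbij.injOn hbij.surjOn fun _ _ => rfl

theorem fst_apply_mem_of_orbit {α β : Type*} {G : Subgroup (Equiv.Perm α × Equiv.Perm β)}
    {S : Finset α} {x : α} (hS : ∀ w, w ∈ S ↔ ∃ g ∈ G, g.1 x = w)
    {g : Equiv.Perm α × Equiv.Perm β} (hg : g ∈ G) {w : α} (hw : w ∈ S) : g.1 w ∈ S := by
  obtain ⟨h, hh, rfl⟩ := (hS w).mp hw
  exact (hS _).mpr ⟨g * h, G.mul_mem hg hh, rfl⟩

theorem IsPermAut.sum_apply_snd {n : ℕ} {R : Type*} [AddCommMonoid R]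
    {N : Matrix (Fin n) (Fin n) R} {g : Equiv.Perm (Fin n) × Equiv.Perm (Fin n)}
    (h : IsPermAut N g) {S : Finset (Fin n)} (hS : ∀ w ∈ S, g.1 w ∈ S) (z : Fin n) :
    ∑ w ∈ S, N w (g.2 z) = ∑ w ∈ S, N w z := by
  rw [← sum_comp_perm_of_mapsTo hS]
  exact sum_congr rfl fun w _ => h w z

theorem Finset.sum_sum_eq_sum_of_existsUnique_mem {ι κ M : Type*} [Fintype ι] [Fintype κ]
    [DecidableEq ι] [AddCommMonoid M] (C : κ → Finset ι) (hC : ∀ z, ∃! j, z ∈ C j)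
    (f : ι → M) : ∑ j, ∑ z ∈ C j, f z = ∑ z, f z := by
  have hdisj : ((univ : Finset κ) : Set κ).PairwiseDisjoint C := fun j₁ _ j₂ _ hne =>
    disjoint_left.mpr fun z hz₁ hz₂ => hne ((hC z).unique hz₁ hz₂)
  have hcover : univ.biUnion C = univ := eq_univ_of_forall fun z => by
    obtain ⟨j, hj, -⟩ := hC z
    exact mem_biUnion.mpr ⟨j, mem_univ j, hj⟩
  rw [← sum_biUnion hdisj, hcover]

theorem Matrix.sum_mul_sum_inv_transpose {ι K : Type*} [Fintype ι] [DecidableEq ι] [CommRing K]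
    {M : Matrix ι ι K} (hM : IsUnit M.det) (S : Finset ι) (x : ι) :
    ∑ z, M x z * ∑ w ∈ S, (M⁻¹)ᵀ w z = if x ∈ S then 1 else 0 := by
  simp only [transpose_apply, mul_sum]
  rw [sum_comm]
  simp only [← mul_apply, mul_nonsing_inv M hM, one_apply, sum_ite_eq]

/-- Let `M` be a nonsingular `n × n` matrix over a field `F`, let
`N = (M⁻¹)ᵀ`, and let `G` be a group of permutation automorphisms of `M` with row orbits
`R_1, …, R_t` and column orbits `C_1, …, C_{t'}`.  For `x ∈ R i`, `x' ∈ R s` and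
representatives `y j ∈ C j`, we have
`Σ_j (Σ_{z ∈ C j} M x z)·(Σ_{w ∈ R s} N w (y j)) = δ_{i s}`. -/
theorem statement12 {F : Type*} [Field F] {n t t' : ℕ}
    (M : Matrix (Fin n) (Fin n) F) (hM : IsUnit M.det)
    (G : Subgroup (Equiv.Perm (Fin n) × Equiv.Perm (Fin n)))
    (hG : ∀ g ∈ G, IsPermAut M g)
    (R : Fin t → Finset (Fin n))
    (hRorb : ∀ i, ∀ x ∈ R i, ∀ w, w ∈ R i ↔ ∃ g ∈ G, g.1 x = w)
    (hRpart : ∀ x : Fin n, ∃! i, x ∈ R i)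
    (C : Fin t' → Finset (Fin n))
    (hCorb : ∀ j, ∀ y ∈ C j, ∀ z, z ∈ C j ↔ ∃ g ∈ G, g.2 y = z)
    (hCpart : ∀ y : Fin n, ∃! j, y ∈ C j)
    (i s : Fin t) (x x' : Fin n) (hx : x ∈ R i) (hx' : x' ∈ R s)
    (y : Fin t' → Fin n) (hy : ∀ j, y j ∈ C j) :
    ∑ j, (∑ z ∈ C j, M x z) * (∑ w ∈ R s, (M⁻¹)ᵀ w (y j)) =
      if i = s then 1 else 0 := by
  have hconst : ∀ j, ∀ z ∈ C j, ∑ w ∈ R s, (M⁻¹)ᵀ w (y j) = ∑ w ∈ R s, (M⁻¹)ᵀ w z := by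
    intro j z hz
    obtain ⟨g, hg, rfl⟩ := (hCorb j (y j) (hy j) z).mp hz
    exact ((hG g hg).inv_transpose.sum_apply_snd
      (fun w => fst_apply_mem_of_orbit (hRorb s x' hx') hg) _).symm
  calc ∑ j, (∑ z ∈ C j, M x z) * (∑ w ∈ R s, (M⁻¹)ᵀ w (y j))
      = ∑ j, ∑ z ∈ C j, M x z * ∑ w ∈ R s, (M⁻¹)ᵀ w z := by
        simp only [sum_mul]
        exact sum_congr rfl fun j _ => sum_congr rfl fun z hz => by rw [hconst j z hz]
    _ = ∑ z, M x z * ∑ w ∈ R s, (M⁻¹)ᵀ w z := sum_sum_eq_sum_of_existsUnique_mem C hCpart _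
    _ = if x ∈ R s then 1 else 0 := M.sum_mul_sum_inv_transpose hM _ _
    _ = if i = s then 1 else 0 := if_congr ⟨(hRpart x).unique hx, (· ▸ hx)⟩ rfl rfl
end

section
/- Let W be a weighing matrix W(n,m) and let G be a group of permutation automorphisms of W, with row orbits R_1,…,R_t of sizes Ω_1,…,Ω_t and column orbits C_1,…,C_t of sizes ω_1,…,ω_t, and let Γ_{ij} = Σ_{z∈C_j} W_{x,z} for a representative x ∈ R_i (taking values in ℤ). Then for all i, s: Σ_{j=1}^{t} (Ω_s/ω_j)·Γ_{ij}·Γ_{sj} = m if i = s and = 0 otherwise, as an identity in ℚ. -/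
/-!
Row sums of `W` over a column orbit are constant on row orbits, and column sums over a row orbit
are constant on column orbits; double counting the block `R_s × C_j` gives
`ω_j · Σ_{y ∈ R_s} W_{y,z} = Ω_s · Γ_{sj}` for `z ∈ C_j`. Hence the left-hand side is
`Σ_z W_{x,z} Σ_{y ∈ R_s} W_{y,z} = Σ_{y ∈ R_s} (W Wᵀ)_{x,y}` with `x = ρ_i`, which is `m` or `0`
according as `x ∈ R_s`.
-/

open Matrix BigOperators

-- The empty set satisfies this too.
def IsOrbitOf {K ι : Type*} [Group K] (G : Subgroup K) (φ : K →* Equiv.Perm ι)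
    (S : Finset ι) : Prop :=
  ∀ y ∈ S, ∀ z, z ∈ S ↔ ∃ g ∈ G, φ g y = z

namespace IsOrbitOf

variable {K ι : Type*} [Group K] {G : Subgroup K} {φ : K →* Equiv.Perm ι} {S : Finset ι}

theorem apply_mem_iff (hS : IsOrbitOf G φ S) {g : K} (hg : g ∈ G) (z : ι) :
    φ g z ∈ S ↔ z ∈ S := by
  refine ⟨fun h => (hS _ h z).mpr ⟨g⁻¹, inv_mem hg, ?_⟩, fun h => (hS z h _).mpr ⟨g, hg, rfl⟩⟩
  rw [map_inv, Equiv.Perm.inv_def, Equiv.symm_apply_apply]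

theorem sum_comp_apply {M : Type*} [AddCommMonoid M] (hS : IsOrbitOf G φ S) {g : K}
    (hg : g ∈ G) (f : ι → M) : ∑ z ∈ S, f (φ g z) = ∑ z ∈ S, f z :=
  Finset.sum_equiv (φ g) (fun z => (hS.apply_mem_iff hg z).symm) (fun _ _ => rfl)

end IsOrbitOf

section PermAut

variable {n : ℕ} {α : Type*} {W : Matrix (Fin n) (Fin n) α}
  {G : Subgroup (Equiv.Perm (Fin n) × Equiv.Perm (Fin n))} {R C : Finset (Fin n)}

theorem sum_row_eq_of_isPermAut [AddCommMonoid α] (hG : ∀ g ∈ G, IsPermAut W g)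
    (hR : IsOrbitOf G (MonoidHom.fst _ _) R) (hC : IsOrbitOf G (MonoidHom.snd _ _) C)
    {x x' : Fin n} (hx : x ∈ R) (hx' : x' ∈ R) :
    ∑ z ∈ C, W x' z = ∑ z ∈ C, W x z := by
  obtain ⟨g, hg, rfl⟩ := (hR x hx x').mp hx'
  calc ∑ z ∈ C, W (g.1 x) z = ∑ z ∈ C, W (g.1 x) (g.2 z) :=
        (hC.sum_comp_apply hg (W (g.1 x))).symm
    _ = ∑ z ∈ C, W x z := Finset.sum_congr rfl fun z _ => hG g hg x z

theorem sum_col_eq_of_isPermAut [AddCommMonoid α] (hG : ∀ g ∈ G, IsPermAut W g)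
    (hR : IsOrbitOf G (MonoidHom.fst _ _) R) (hC : IsOrbitOf G (MonoidHom.snd _ _) C)
    {z z' : Fin n} (hz : z ∈ C) (hz' : z' ∈ C) :
    ∑ y ∈ R, W y z' = ∑ y ∈ R, W y z := by
  obtain ⟨g, hg, rfl⟩ := (hC z hz z').mp hz'
  calc ∑ y ∈ R, W y (g.2 z) = ∑ y ∈ R, W (g.1 y) (g.2 z) :=
        (hR.sum_comp_apply hg (W · (g.2 z))).symm
    _ = ∑ y ∈ R, W y z := Finset.sum_congr rfl fun y _ => hG g hg y z

theorem card_nsmul_sum_col_eq [AddCommMonoid α] (hG : ∀ g ∈ G, IsPermAut W g)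
    (hR : IsOrbitOf G (MonoidHom.fst _ _) R) (hC : IsOrbitOf G (MonoidHom.snd _ _) C)
    {x z : Fin n} (hx : x ∈ R) (hz : z ∈ C) :
    C.card • ∑ y ∈ R, W y z = R.card • ∑ z ∈ C, W x z :=
  calc C.card • ∑ y ∈ R, W y z = ∑ z' ∈ C, ∑ y ∈ R, W y z' := by
        rw [Finset.sum_congr rfl fun z' hz' => sum_col_eq_of_isPermAut hG hR hC hz hz',
          Finset.sum_const]
    _ = ∑ y ∈ R, ∑ z' ∈ C, W y z' := Finset.sum_comm
    _ = R.card • ∑ z ∈ C, W x z := by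
        rw [Finset.sum_congr rfl fun y hy => sum_row_eq_of_isPermAut hG hR hC hx hy,
          Finset.sum_const]

theorem cast_sum_mul_sum_col_eq {W : Matrix (Fin n) (Fin n) ℤ} (hG : ∀ g ∈ G, IsPermAut W g)
    (hR : IsOrbitOf G (MonoidHom.fst _ _) R) (hC : IsOrbitOf G (MonoidHom.snd _ _) C)
    (x : Fin n) {x₀ : Fin n} (hx₀ : x₀ ∈ R) :
    ((∑ z ∈ C, W x z * ∑ y ∈ R, W y z : ℤ) : ℚ) =
      (R.card : ℚ) / C.card * ((∑ z ∈ C, W x z : ℤ) : ℚ) * ((∑ z ∈ C, W x₀ z : ℤ) : ℚ) := by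
  rcases C.eq_empty_or_nonempty with rfl | ⟨z₀, hz₀⟩
  · simp
  have hsum : ∑ z ∈ C, W x z * ∑ y ∈ R, W y z = (∑ z ∈ C, W x z) * ∑ y ∈ R, W y z₀ := by
    rw [Finset.sum_mul]
    exact Finset.sum_congr rfl fun z hz => by rw [sum_col_eq_of_isPermAut hG hR hC hz₀ hz]
  have hcount : (C.card : ℚ) * ((∑ y ∈ R, W y z₀ : ℤ) : ℚ) =
      R.card * ((∑ z ∈ C, W x₀ z : ℤ) : ℚ) := by
    exact_mod_cast card_nsmul_sum_col_eq hG hR hC hx₀ hz₀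
  have hC₀ : (C.card : ℚ) ≠ 0 := by exact_mod_cast (Finset.card_pos.mpr ⟨z₀, hz₀⟩).ne'
  rw [hsum, Int.cast_mul, div_mul_eq_mul_div, div_mul_eq_mul_div, eq_div_iff hC₀]
  linear_combination ((∑ z ∈ C, W x z : ℤ) : ℚ) * hcount

end PermAut

theorem sum_mul_sum_eq_of_mul_transpose_eq {ι α : Type*} [Fintype ι] [DecidableEq ι]
    [CommSemiring α] {W : Matrix ι ι α} {c : α} (hW : W * Wᵀ = c • 1) (x : ι) (S : Finset ι) :
    ∑ z, W x z * ∑ y ∈ S, W y z = if x ∈ S then c else 0 := by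
  have hrow : ∀ y, ∑ z, W x z * W y z = if x = y then c else 0 := fun y => by
    simpa [Matrix.mul_apply, Matrix.one_apply] using congrFun (congrFun hW x) y
  simp_rw [Finset.mul_sum]
  rw [Finset.sum_comm]
  simp_rw [hrow]
  exact Finset.sum_ite_eq S x fun _ => c

theorem Finset.sum_eq_sum_sum_of_existsUnique_mem {ι κ M : Type*} [Fintype ι] [Fintype κ]
    [AddCommMonoid M] {C : κ → Finset ι} (hC : ∀ y, ∃! j, y ∈ C j) (f : ι → M) :
    ∑ y, f y = ∑ j, ∑ y ∈ C j, f y := by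
  classical
  have hdisj : (Set.univ : Set κ).PairwiseDisjoint C := fun a _ b _ hab =>
    Finset.disjoint_left.mpr fun y ha hb => hab ((hC y).unique ha hb)
  have hcover : Finset.univ.biUnion C = Finset.univ := Finset.eq_univ_of_forall fun y => by
    obtain ⟨j, hj, -⟩ := hC y
    exact Finset.mem_biUnion.mpr ⟨j, Finset.mem_univ j, hj⟩
  rw [← Finset.sum_biUnion (by simpa using hdisj), hcover]

theorem statement14_general {n m t : ℕ}
    (W : Matrix (Fin n) (Fin n) ℤ)
    (hW : W * Wᵀ = (m : ℤ) • (1 : Matrix (Fin n) (Fin n) ℤ))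
    (G : Subgroup (Equiv.Perm (Fin n) × Equiv.Perm (Fin n)))
    (hG : ∀ g ∈ G, IsPermAut W g)
    (R : Fin t → Finset (Fin n))
    (hRorb : ∀ i, ∀ x ∈ R i, ∀ w, w ∈ R i ↔ ∃ g ∈ G, g.1 x = w)
    (hRpart : ∀ x : Fin n, ∃! i, x ∈ R i)
    (C : Fin t → Finset (Fin n))
    (hCorb : ∀ j, ∀ y ∈ C j, ∀ z, z ∈ C j ↔ ∃ g ∈ G, g.2 y = z)
    (hCpart : ∀ y : Fin n, ∃! j, y ∈ C j)
    (ρ : Fin t → Fin n) (hρ : ∀ i, ρ i ∈ R i)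
    (i s : Fin t) :
    ∑ j, ((R s).card : ℚ) / ((C j).card : ℚ) *
        ((∑ z ∈ C j, W (ρ i) z : ℤ) : ℚ) * ((∑ z ∈ C j, W (ρ s) z : ℤ) : ℚ) =
      if i = s then (m : ℚ) else 0 := by
  have hmem : ρ i ∈ R s ↔ i = s :=
    ⟨fun h => (hRpart (ρ i)).unique (hρ i) h, fun h => h ▸ hρ i⟩
  calc _ = ∑ j, ((∑ z ∈ C j, W (ρ i) z * ∑ y ∈ R s, W y z : ℤ) : ℚ) :=
        Finset.sum_congr rfl fun j _ =>
          (cast_sum_mul_sum_col_eq hG (hRorb s) (hCorb j) (ρ i) (hρ s)).symm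
    _ = ((∑ z, W (ρ i) z * ∑ y ∈ R s, W y z : ℤ) : ℚ) := by
        rw [Finset.sum_eq_sum_sum_of_existsUnique_mem hCpart, Int.cast_sum]
    _ = if i = s then (m : ℚ) else 0 := by
        rw [sum_mul_sum_eq_of_mul_transpose_eq hW]
        simp only [hmem]
        split_ifs <;> simp

/-- Let `W` be a weighing matrix `W(n,m)` with a group `G` of
permutation automorphisms having row orbits `R_1, …, R_t` (of sizes `Ω_i`) and column
orbits `C_1, …, C_t` (of sizes `ω_j`), and let `Γ_{ij} = Σ_{z ∈ C j} W (ρ i) z ∈ ℤ` for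
representatives `ρ i ∈ R i`.  Then `Σ_j (Ω_s/ω_j)·Γ_{ij}·Γ_{sj} = δ_{is}·m` in `ℚ`. -/
theorem statement14 {n m t : ℕ}
    (W : Matrix (Fin n) (Fin n) ℤ)
    (hWent : ∀ i j, W i j = 0 ∨ W i j = 1 ∨ W i j = -1)
    (hW : W * Wᵀ = (m : ℤ) • (1 : Matrix (Fin n) (Fin n) ℤ))
    (G : Subgroup (Equiv.Perm (Fin n) × Equiv.Perm (Fin n)))
    (hG : ∀ g ∈ G, IsPermAut W g)
    (R : Fin t → Finset (Fin n))
    (hRorb : ∀ i, ∀ x ∈ R i, ∀ w, w ∈ R i ↔ ∃ g ∈ G, g.1 x = w)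
    (hRpart : ∀ x : Fin n, ∃! i, x ∈ R i)
    (C : Fin t → Finset (Fin n))
    (hCorb : ∀ j, ∀ y ∈ C j, ∀ z, z ∈ C j ↔ ∃ g ∈ G, g.2 y = z)
    (hCpart : ∀ y : Fin n, ∃! j, y ∈ C j)
    (ρ : Fin t → Fin n) (hρ : ∀ i, ρ i ∈ R i)
    (i s : Fin t) :
    ∑ j, ((R s).card : ℚ) / ((C j).card : ℚ) *
        ((∑ z ∈ C j, W (ρ i) z : ℤ) : ℚ) * ((∑ z ∈ C j, W (ρ s) z : ℤ) : ℚ) =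
      if i = s then (m : ℚ) else 0 :=
  statement14_general W hW G hG R hRorb hRpart C hCorb hCpart ρ hρ i s
end

section
/- Let W be a skew-weighing matrix W(n,m) and let G be a group of permutation automorphisms of W acting with t orbits all of the same length w, such that for every index s the row orbit of s equals the column orbit of s (as subsets of {1,…,n}). Then the t×t row orbit matrix R = [Γ_{ij}] of W with respect to G (indexed by the common orbit partition) is skew symmetric: Γ_{ij} = −Γ_{ji} for all i,j, and in particular Γ_{ii} = 0. -/
open Matrix BigOperators

/-!
Summing the block of `W` cut out by the row orbit `R i` and the column orbit `R j` in two
ways: by automorphism invariance every row of the block has the same sum `Γ i j`, and every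
column has the same sum, which by skew symmetry is `-Γ j i`. Both orbits have `w` elements,
so `w • Γ i j = w • (-Γ j i)`.
-/

variable {H α β R : Type*} [Group H]

def IsOrbitFinset (G : Subgroup H) (φ : H →* Equiv.Perm α) (S : Finset α) : Prop :=
  ∀ y ∈ S, ∀ z, z ∈ S ↔ ∃ g ∈ G, φ g y = z

theorem IsOrbitFinset.apply_mem_iff {G : Subgroup H} {φ : H →* Equiv.Perm α} {S : Finset α}
    (hS : IsOrbitFinset G φ S) {g : H} (hg : g ∈ G) (z : α) : φ g z ∈ S ↔ z ∈ S := by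
  refine ⟨fun hgz => ?_, fun hz => (hS z hz _).2 ⟨g, hg, rfl⟩⟩
  exact (hS _ hgz z).2 ⟨g⁻¹, inv_mem hg, by simp⟩

theorem sum_row_eq_of_mem_orbit [AddCommMonoid R] {G : Subgroup H}
    {φ : H →* Equiv.Perm α} {ψ : H →* Equiv.Perm β} {M : Matrix α β R}
    (hM : ∀ g ∈ G, ∀ i j, M (φ g i) (ψ g j) = M i j) {A : Finset α} {C : Finset β}
    (hA : IsOrbitFinset G φ A) (hC : IsOrbitFinset G ψ C) {x y : α} (hx : x ∈ A)
    (hy : y ∈ A) : ∑ z ∈ C, M y z = ∑ z ∈ C, M x z := by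
  obtain ⟨g, hg, rfl⟩ := (hA x hx y).1 hy
  calc ∑ z ∈ C, M (φ g x) z = ∑ z ∈ C, M (φ g x) (ψ g z) :=
        (Finset.sum_equiv (ψ g) (fun z => (hC.apply_mem_iff hg z).symm) fun _ _ => rfl).symm
    _ = ∑ z ∈ C, M x z := Finset.sum_congr rfl fun z _ => hM g hg x z

theorem sum_col_eq_of_mem_orbit [AddCommMonoid R] {G : Subgroup H}
    {φ : H →* Equiv.Perm α} {ψ : H →* Equiv.Perm β} {M : Matrix α β R}
    (hM : ∀ g ∈ G, ∀ i j, M (φ g i) (ψ g j) = M i j) {A : Finset α} {C : Finset β}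
    (hA : IsOrbitFinset G φ A) (hC : IsOrbitFinset G ψ C) {x y : β} (hx : x ∈ C)
    (hy : y ∈ C) : ∑ z ∈ A, M z y = ∑ z ∈ A, M z x :=
  sum_row_eq_of_mem_orbit (M := Mᵀ) (fun g hg i j => hM g hg j i) hC hA hx hy

theorem eq_of_sum_rows_eq_of_sum_cols_eq [AddCommMonoid R] [IsAddTorsionFree R]
    {M : Matrix α β R} {A : Finset α} {B : Finset β} (hcard : A.card = B.card)
    (hA : A.Nonempty) {a b : R} (ha : ∀ x ∈ A, ∑ z ∈ B, M x z = a)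
    (hb : ∀ z ∈ B, ∑ x ∈ A, M x z = b) : a = b := by
  refine nsmul_right_injective hA.card_pos.ne' ?_
  calc A.card • a = ∑ x ∈ A, ∑ z ∈ B, M x z := by rw [Finset.sum_congr rfl ha, Finset.sum_const]
    _ = ∑ z ∈ B, ∑ x ∈ A, M x z := Finset.sum_comm
    _ = A.card • b := by rw [Finset.sum_congr rfl hb, Finset.sum_const, hcard]

theorem statement16_general {n t w : ℕ}
    (W : Matrix (Fin n) (Fin n) ℤ)
    (hskew : Wᵀ = -W)
    (G : Subgroup (Equiv.Perm (Fin n) × Equiv.Perm (Fin n)))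
    (hG : ∀ g ∈ G, IsPermAut W g)
    (R : Fin t → Finset (Fin n))
    (hRorb : ∀ i, ∀ x ∈ R i, ∀ u, u ∈ R i ↔ ∃ g ∈ G, g.1 x = u)
    (hCorb : ∀ i, ∀ y ∈ R i, ∀ z, z ∈ R i ↔ ∃ g ∈ G, g.2 y = z)
    (hlen : ∀ i, (R i).card = w)
    (ρ : Fin t → Fin n) (hρ : ∀ i, ρ i ∈ R i) :
    (∀ i j, (∑ z ∈ R j, W (ρ i) z) = -(∑ z ∈ R i, W (ρ j) z)) ∧
    (∀ i, (∑ z ∈ R i, W (ρ i) z) = 0) := by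
  have hRow (i : Fin t) : IsOrbitFinset G (MonoidHom.fst _ _) (R i) := hRorb i
  have hCol (i : Fin t) : IsOrbitFinset G (MonoidHom.snd _ _) (R i) := hCorb i
  have skew (i j : Fin t) : (∑ z ∈ R j, W (ρ i) z) = -(∑ z ∈ R i, W (ρ j) z) := by
    have hblock : (∑ z ∈ R j, W (ρ i) z) = ∑ x ∈ R i, W x (ρ j) :=
      eq_of_sum_rows_eq_of_sum_cols_eq ((hlen i).trans (hlen j).symm) ⟨ρ i, hρ i⟩
        (fun x hx => sum_row_eq_of_mem_orbit hG (hRow i) (hCol j) (hρ i) hx)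
        (fun z hz => sum_col_eq_of_mem_orbit hG (hRow i) (hCol j) (hρ j) hz)
    rw [hblock, ← Finset.sum_neg_distrib]
    exact Finset.sum_congr rfl fun x _ => by
      simpa using congrFun (congrFun hskew (ρ j)) x
  exact ⟨skew, fun i => by linarith [skew i i]⟩

/-- Let `W` be a skew-weighing matrix `W(n,m)` and let `G` be a group
of permutation automorphisms of `W` acting with `t` orbits, all of the same length `w`,
such that for every index `s` the row orbit of `s` equals the column orbit of `s` (so the
row and column orbit partitions coincide, given by `R`).  Then the row orbit matrix
`Γ_{ij} = Σ_{z ∈ R j} W (ρ i) z` is skew symmetric: `Γ_{ij} = -Γ_{ji}` and `Γ_{ii} = 0`. -/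
theorem statement16 {n m t w : ℕ}
    (W : Matrix (Fin n) (Fin n) ℤ)
    (hWent : ∀ i j, W i j = 0 ∨ W i j = 1 ∨ W i j = -1)
    (hW : W * Wᵀ = (m : ℤ) • (1 : Matrix (Fin n) (Fin n) ℤ))
    (hskew : Wᵀ = -W)
    (G : Subgroup (Equiv.Perm (Fin n) × Equiv.Perm (Fin n)))
    (hG : ∀ g ∈ G, IsPermAut W g)
    (R : Fin t → Finset (Fin n))
    (hRorb : ∀ i, ∀ x ∈ R i, ∀ u, u ∈ R i ↔ ∃ g ∈ G, g.1 x = u)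
    (hCorb : ∀ i, ∀ y ∈ R i, ∀ z, z ∈ R i ↔ ∃ g ∈ G, g.2 y = z)
    (hpart : ∀ x : Fin n, ∃! i, x ∈ R i)
    (hlen : ∀ i, (R i).card = w)
    (ρ : Fin t → Fin n) (hρ : ∀ i, ρ i ∈ R i) :
    (∀ i j, (∑ z ∈ R j, W (ρ i) z) = -(∑ z ∈ R i, W (ρ j) z)) ∧
    (∀ i, (∑ z ∈ R i, W (ρ i) z) = 0) :=
  statement16_general W hskew G hG R hRorb hCorb hlen ρ hρ
end

section
/- Let W be a skew-weighing matrix W(n,m) and let G be a group of permutation automorphisms of W acting with t orbits all of the same length w, such that for every index s the row orbit of s equals the column orbit of s. Let R be the t×t row orbit matrix of W with respect to G, let B be a t×b point-by-block incidence matrix of an (r,λ)-design on t points, and let α ∈ F_q. If (r + α² + (t−1)λ + m) ≠ 0 and (r + α² − λ + m) ≠ 0 in F_q, then A = [R + α·I_t | B] (entries reduced modulo p) generates an LCD code C of length t+b over F_q. -/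
open Matrix BigOperators

/-!
A code generated by `A` is LCD as soon as the Gram matrix `A Aᵀ` is nonsingular: a codeword
`xA` orthogonal to every row satisfies `A Aᵀ x = 0`.

Let `P` be the point-orbit incidence matrix. Since each orbit is both a row orbit and a column
orbit, orbit sums of `W` are constant along orbits, i.e. `W P = P R` and `Pᵀ W = C Pᵀ`, where `C`
records the column-orbit sums. Equal orbit lengths give `Pᵀ P = w I`, and then
`w C = C Pᵀ P = Pᵀ W P = Pᵀ P R = w R`. With `Pᵀ W = R Pᵀ` the identities `W Wᵀ = m I` and
`Wᵀ = -W` descend to `R Rᵀ = m I` and `Rᵀ = -R`. Hence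
`A Aᵀ = (R + αI)(R + αI)ᵀ + B Bᵀ = (r + α² - λ + m) I + λ J`, whose determinant
`a^(t-1) (a + tλ)`, with `a = r + α² - λ + m`, is nonzero by the two hypotheses.
-/

theorem isLCD_rowSpan_of_det_ne_zero {F k ι : Type*} [Field F] [Fintype k] [DecidableEq k]
    [Fintype ι] (A : Matrix k ι F) (hA : (A * Aᵀ).det ≠ 0) : IsLCD (rowSpan F A) := by
  rw [IsLCD, eq_bot_iff]
  rintro v ⟨hv, hv_dual⟩
  rw [rowSpan, ← row_def, ← range_vecMulLinear] at hv
  obtain ⟨x, rfl⟩ := hv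
  have hAv : A *ᵥ (x ᵥ* A) = 0 := funext fun k => by
    rw [mulVec, dotProduct_comm]
    exact hv_dual _ (Submodule.subset_span ⟨k, rfl⟩)
  have hx : x = 0 := eq_zero_of_mulVec_eq_zero hA (by rwa [← mulVec_mulVec, mulVec_transpose])
  simp [hx]

theorem det_smul_one_add_const_ne_zero {F ι : Type*} [Field F] [Fintype ι] [DecidableEq ι]
    {a c : F} (ha : a ≠ 0) (hac : a + Fintype.card ι * c ≠ 0) :
    (a • 1 + of fun _ _ : ι => c).det ≠ 0 := by
  have hrank_one : a • 1 + of (fun _ _ : ι => c) = a • ((1 : Matrix ι ι F) +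
      replicateCol Unit (fun _ : ι => c / a) * replicateRow Unit (fun _ : ι => (1 : F))) := by
    ext i j
    by_cases h : i = j <;> simp [h, mul_apply, mul_add, mul_div_cancel₀ _ ha]
  rw [hrank_one, det_smul, det_one_add_replicateCol_mul_replicateRow]
  simp only [dotProduct, one_mul, Finset.sum_const, Finset.card_univ, nsmul_eq_mul]
  refine mul_ne_zero (pow_ne_zero _ ha) ?_
  rw [mul_div_assoc', one_add_div ha]
  exact div_ne_zero hac ha

section QuotientMatrix

variable {ι κ R : Type*} [Fintype ι] [Fintype κ] [DecidableEq κ] [CommRing R]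
  {W : Matrix ι ι R} {P : Matrix ι κ R} {Q : Matrix κ κ R} {w : R}

theorem eq_of_mul_eq_mul_of_transpose_mul_eq_mul (hP : Pᵀ * P = w • 1)
    (hw : IsSMulRegular (Matrix κ κ R) w) {C : Matrix κ κ R} (hWP : W * P = P * Q)
    (hPW : Pᵀ * W = C * Pᵀ) : C = Q :=
  hw <|
    calc w • C = C * (Pᵀ * P) := by rw [hP, Matrix.mul_smul, Matrix.mul_one]
      _ = Pᵀ * (W * P) := by rw [← Matrix.mul_assoc, ← hPW, Matrix.mul_assoc]
      _ = w • Q := by rw [hWP, ← Matrix.mul_assoc, hP, Matrix.smul_mul, Matrix.one_mul]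

theorem mul_transpose_eq_of_transpose_mul_eq_mul [DecidableEq ι] (hP : Pᵀ * P = w • 1)
    (hw : IsSMulRegular (Matrix κ κ R) w) (hPW : Pᵀ * W = Q * Pᵀ) {m : R}
    (hW : W * Wᵀ = m • 1) : Q * Qᵀ = m • 1 :=
  hw <|
    calc w • (Q * Qᵀ)
        _ = (Q * Pᵀ) * (Q * Pᵀ)ᵀ := by
          rw [transpose_mul, transpose_transpose, Matrix.mul_assoc, ← Matrix.mul_assoc Pᵀ, hP,
            Matrix.smul_mul, Matrix.one_mul, Matrix.mul_smul]
        _ = Pᵀ * (W * Wᵀ) * P := by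
          rw [← hPW, transpose_mul, transpose_transpose, Matrix.mul_assoc, Matrix.mul_assoc,
            Matrix.mul_assoc]
        _ = w • m • 1 := by
          rw [hW, Matrix.mul_smul, Matrix.mul_one, Matrix.smul_mul, hP, smul_comm]

theorem transpose_eq_neg_of_transpose_mul_eq_mul (hP : Pᵀ * P = w • 1)
    (hw : IsSMulRegular (Matrix κ κ R) w) (hPW : Pᵀ * W = Q * Pᵀ) (hskew : Wᵀ = -W) :
    Qᵀ = -Q :=
  hw <|
    calc w • Qᵀ
        _ = Pᵀ * (Q * Pᵀ)ᵀ := by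
          rw [transpose_mul, transpose_transpose, ← Matrix.mul_assoc, hP, Matrix.smul_mul,
            Matrix.one_mul]
        _ = -(Pᵀ * W * P) := by
          rw [← hPW, transpose_mul, transpose_transpose, hskew, Matrix.neg_mul, Matrix.mul_neg,
            Matrix.mul_assoc]
        _ = w • -Q := by
          rw [hPW, Matrix.mul_assoc, hP, Matrix.mul_smul, Matrix.mul_one, smul_neg]

end QuotientMatrix

def IsOrbit {Γ α : Type*} [Group Γ] (π : Γ →* Equiv.Perm α) (G : Subgroup Γ) (O : Finset α) :
    Prop :=
  ∀ x ∈ O, ∀ u, u ∈ O ↔ ∃ g ∈ G, π g x = u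

theorem IsOrbit.sum_comp_apply {Γ α M : Type*} [Group Γ] [AddCommMonoid M]
    {π : Γ →* Equiv.Perm α} {G : Subgroup Γ} {O : Finset α} (hO : IsOrbit π G O) {g : Γ}
    (hg : g ∈ G) (f : α → M) : ∑ x ∈ O, f (π g x) = ∑ x ∈ O, f x :=
  Finset.sum_equiv (π g)
    (fun x => ⟨fun hx => (hO x hx _).2 ⟨g, hg, rfl⟩,
      fun hx => (hO _ hx x).2 ⟨g⁻¹, inv_mem hg, by simp⟩⟩)
    fun _ _ => rfl

section OrbitMatrix

variable {ι κ R : Type*}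

def orbitMatrix [AddCommMonoid R] (W : Matrix ι ι R) (Orb : κ → Finset ι) (ρ : κ → ι) :
    Matrix κ κ R :=
  of fun i j => ∑ z ∈ Orb j, W (ρ i) z

def orbitIncidence (R : Type*) [Zero R] [One R] [DecidableEq ι] (Orb : κ → Finset ι) :
    Matrix ι κ R :=
  of fun x j => if x ∈ Orb j then 1 else 0

theorem isSMulRegular_card_of_nonempty [CommRing R] [IsDomain R] [CharZero R]
    {Orb : κ → Finset ι} {w : ℕ} (hlen : ∀ i, (Orb i).card = w) (hne : ∀ i, (Orb i).Nonempty) :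
    IsSMulRegular (Matrix κ κ R) (w : R) := by
  rcases isEmpty_or_nonempty κ with hκ | ⟨⟨i⟩⟩
  · exact fun X Y _ => Subsingleton.elim X Y
  · exact smul_right_injective (κ → κ → R) (Nat.cast_ne_zero.2 (hlen i ▸ (hne i).card_pos.ne'))

variable [CommSemiring R] [DecidableEq ι] {Orb : κ → Finset ι}

theorem sum_orbitIncidence_mul [Fintype ι] (f : ι → R) (j : κ) :
    ∑ x, orbitIncidence R Orb x j * f x = ∑ x ∈ Orb j, f x := by
  simp [orbitIncidence, Finset.sum_ite_mem]

variable [DecidableEq κ]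

theorem orbitIncidence_apply_of_mem (hpart : ∀ x, ∃! i, x ∈ Orb i) {x : ι} {i : κ}
    (hx : x ∈ Orb i) (j : κ) : orbitIncidence R Orb x j = if i = j then 1 else 0 := by
  simp only [orbitIncidence, of_apply]
  exact if_congr ⟨fun hj => (hpart x).unique hx hj, fun h => h ▸ hx⟩ rfl rfl

variable [Fintype ι]

theorem transpose_orbitIncidence_mul_self (hpart : ∀ x, ∃! i, x ∈ Orb i) {w : ℕ}
    (hlen : ∀ i, (Orb i).card = w) :
    (orbitIncidence R Orb)ᵀ * orbitIncidence R Orb = (w : R) • (1 : Matrix κ κ R) := by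
  refine Matrix.ext fun i j => ?_
  simp only [mul_apply, transpose_apply]
  rw [sum_orbitIncidence_mul,
    Finset.sum_congr rfl fun x hx => orbitIncidence_apply_of_mem hpart hx j]
  simp [hlen, one_apply]

variable [Fintype κ]

theorem mul_orbitIncidence_of_sum_eq (hpart : ∀ x, ∃! i, x ∈ Orb i) {W : Matrix ι ι R}
    {Q : Matrix κ κ R} (hrow : ∀ i, ∀ x ∈ Orb i, ∀ j, ∑ z ∈ Orb j, W x z = Q i j) :
    W * orbitIncidence R Orb = orbitIncidence R Orb * Q := by
  refine Matrix.ext fun x j => ?_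
  obtain ⟨i, hx, -⟩ := hpart x
  simp only [mul_apply, orbitIncidence_apply_of_mem hpart hx]
  simp_rw [mul_comm (W x _), sum_orbitIncidence_mul, hrow i x hx]
  simp

theorem transpose_orbitIncidence_mul_of_sum_eq (hpart : ∀ x, ∃! i, x ∈ Orb i)
    {W : Matrix ι ι R} {C : Matrix κ κ R}
    (hcol : ∀ j, ∀ y ∈ Orb j, ∀ k, ∑ x ∈ Orb k, W x y = C k j) :
    (orbitIncidence R Orb)ᵀ * W = C * (orbitIncidence R Orb)ᵀ := by
  refine Matrix.ext fun k y => ?_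
  obtain ⟨j, hy, -⟩ := hpart y
  simp only [mul_apply, transpose_apply, orbitIncidence_apply_of_mem hpart hy]
  rw [sum_orbitIncidence_mul, hcol j y hy]
  simp

end OrbitMatrix

section PermAut

variable {n : ℕ} {G : Subgroup (Equiv.Perm (Fin n) × Equiv.Perm (Fin n))}

theorem sum_orbit_apply_fst {M : Type*} [AddCommMonoid M] {W : Matrix (Fin n) (Fin n) M}
    (hG : ∀ g ∈ G, IsPermAut W g) {O : Finset (Fin n)} (hO : IsOrbit (MonoidHom.snd _ _) G O)
    {g : Equiv.Perm (Fin n) × Equiv.Perm (Fin n)} (hg : g ∈ G) (x : Fin n) :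
    ∑ z ∈ O, W (g.1 x) z = ∑ z ∈ O, W x z := by
  rw [← hO.sum_comp_apply hg]
  exact Finset.sum_congr rfl fun z _ => hG g hg x z

theorem sum_orbit_apply_snd {M : Type*} [AddCommMonoid M] {W : Matrix (Fin n) (Fin n) M}
    (hG : ∀ g ∈ G, IsPermAut W g) {O : Finset (Fin n)} (hO : IsOrbit (MonoidHom.fst _ _) G O)
    {g : Equiv.Perm (Fin n) × Equiv.Perm (Fin n)} (hg : g ∈ G) (y : Fin n) :
    ∑ x ∈ O, W x (g.2 y) = ∑ x ∈ O, W x y := by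
  rw [← hO.sum_comp_apply hg]
  exact Finset.sum_congr rfl fun x _ => hG g hg x y

theorem transpose_orbitIncidence_mul_eq {R κ : Type*} [CommRing R] [IsDomain R] [CharZero R]
    [Fintype κ] [DecidableEq κ] {W : Matrix (Fin n) (Fin n) R} (hG : ∀ g ∈ G, IsPermAut W g)
    {Orb : κ → Finset (Fin n)} (hRorb : ∀ i, IsOrbit (MonoidHom.fst _ _) G (Orb i))
    (hCorb : ∀ i, IsOrbit (MonoidHom.snd _ _) G (Orb i)) (hpart : ∀ x, ∃! i, x ∈ Orb i)
    {w : ℕ} (hlen : ∀ i, (Orb i).card = w) {ρ : κ → Fin n} (hρ : ∀ i, ρ i ∈ Orb i) :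
    (orbitIncidence R Orb)ᵀ * W = orbitMatrix W Orb ρ * (orbitIncidence R Orb)ᵀ := by
  have hrow : ∀ i, ∀ x ∈ Orb i, ∀ j, ∑ z ∈ Orb j, W x z = orbitMatrix W Orb ρ i j := by
    intro i x hx j
    obtain ⟨g, hg, rfl⟩ := (hRorb i (ρ i) (hρ i) x).1 hx
    exact sum_orbit_apply_fst hG (hCorb j) hg (ρ i)
  have hcol : ∀ j, ∀ y ∈ Orb j, ∀ k, ∑ x ∈ Orb k, W x y = ∑ x ∈ Orb k, W x (ρ j) := by
    intro j y hy k
    obtain ⟨g, hg, rfl⟩ := (hCorb j (ρ j) (hρ j) y).1 hy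
    exact sum_orbit_apply_snd hG (hRorb k) hg (ρ j)
  have hPW := transpose_orbitIncidence_mul_of_sum_eq (R := R) hpart
    (C := of fun k j => ∑ x ∈ Orb k, W x (ρ j)) hcol
  rwa [eq_of_mul_eq_mul_of_transpose_mul_eq_mul (transpose_orbitIncidence_mul_self hpart hlen)
    (isSMulRegular_card_of_nonempty hlen fun i => ⟨ρ i, hρ i⟩)
    (mul_orbitIncidence_of_sum_eq hpart hrow) hPW] at hPW

end PermAut

theorem add_smul_one_mul_transpose_of_transpose_eq_neg {R ι : Type*} [CommRing R] [Fintype ι]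
    [DecidableEq ι] {S : Matrix ι ι R} {m : R} (hS : Sᵀ = -S) (hSS : S * Sᵀ = m • 1) (a : R) :
    (S + a • 1) * (S + a • 1)ᵀ = (m + a ^ 2) • 1 := by
  rw [transpose_add, transpose_smul, transpose_one, add_mul, mul_add, mul_add, hSS, hS]
  simp only [Matrix.mul_smul, Matrix.smul_mul, Matrix.mul_one, Matrix.one_mul, smul_neg,
    smul_smul]
  module

theorem map_intCast_mul_transpose_s17 {R ι κ : Type*} [Ring R] [Fintype κ] (M : Matrix ι κ ℤ) :
    M.map (Int.cast : ℤ → R) * (M.map (Int.cast : ℤ → R))ᵀ = (M * Mᵀ).map Int.cast := by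
  rw [← transpose_map]
  exact (Matrix.map_mul (f := Int.castRingHom R)).symm

theorem statement17_general {F : Type*} [Field F] {n m t b r lam w : ℕ}
    (W : Matrix (Fin n) (Fin n) ℤ)
    (hW : W * Wᵀ = (m : ℤ) • (1 : Matrix (Fin n) (Fin n) ℤ))
    (hskew : Wᵀ = -W)
    (G : Subgroup (Equiv.Perm (Fin n) × Equiv.Perm (Fin n)))
    (hG : ∀ g ∈ G, IsPermAut W g)
    (Orb : Fin t → Finset (Fin n))
    (hRorb : ∀ i, ∀ x ∈ Orb i, ∀ u, u ∈ Orb i ↔ ∃ g ∈ G, g.1 x = u)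
    (hCorb : ∀ i, ∀ y ∈ Orb i, ∀ z, z ∈ Orb i ↔ ∃ g ∈ G, g.2 y = z)
    (hpart : ∀ x : Fin n, ∃! i, x ∈ Orb i)
    (hlen : ∀ i, (Orb i).card = w)
    (ρ : Fin t → Fin n) (hρ : ∀ i, ρ i ∈ Orb i)
    (B : Matrix (Fin t) (Fin b) ℤ)
    (hB : B * Bᵀ = ((r : ℤ) - (lam : ℤ)) • (1 : Matrix (Fin t) (Fin t) ℤ)
          + Matrix.of (fun _ _ => (lam : ℤ)))
    (α : F)
    (h1 : (r : F) + α ^ 2 + ((t : F) - 1) * (lam : F) + (m : F) ≠ 0)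
    (h2 : (r : F) + α ^ 2 - (lam : F) + (m : F) ≠ 0)
    (A : Matrix (Fin t) (Fin t ⊕ Fin b) F)
    (hA : A = Matrix.fromCols
      ((Matrix.of fun i j => ∑ z ∈ Orb j, W (ρ i) z).map (Int.cast : ℤ → F)
        + α • (1 : Matrix (Fin t) (Fin t) F))
      (B.map (Int.cast : ℤ → F))) :
    IsLCD (rowSpan F A) := by
  have hP := transpose_orbitIncidence_mul_self (R := ℤ) hpart hlen
  have hw := isSMulRegular_card_of_nonempty (R := ℤ) hlen fun i => ⟨ρ i, hρ i⟩
  have hPW := transpose_orbitIncidence_mul_eq hG hRorb hCorb hpart hlen hρ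
  have hQQ := mul_transpose_eq_of_transpose_mul_eq_mul hP hw hPW hW
  have hQ := transpose_eq_neg_of_transpose_mul_eq_mul hP hw hPW hskew
  set S := (orbitMatrix W Orb ρ).map (Int.cast : ℤ → F)
  have hS : Sᵀ = -S := by rw [← transpose_map, hQ, Matrix.map_neg _ Int.cast_neg]
  have hSS : S * Sᵀ = (m : F) • 1 := by
    rw [map_intCast_mul_transpose_s17, hQQ]
    refine Matrix.ext fun i j => ?_
    by_cases h : i = j <;> simp [h, one_apply, Matrix.natCast_apply]
  have hgram : A * Aᵀ = ((r : F) + α ^ 2 - lam + m) • 1 + of fun _ _ => (lam : F) := by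
    change A = fromCols (S + α • 1) (B.map Int.cast) at hA
    rw [hA, transpose_fromCols, fromCols_mul_fromRows,
      add_smul_one_mul_transpose_of_transpose_eq_neg hS hSS, map_intCast_mul_transpose_s17, hB]
    refine Matrix.ext fun i j => ?_
    by_cases h : i = j <;> simp [h, one_apply, Matrix.natCast_apply]
    ring
  apply isLCD_rowSpan_of_det_ne_zero
  rw [hgram]
  refine det_smul_one_add_const_ne_zero h2 fun h => h1 ?_
  rw [Fintype.card_fin] at h
  linear_combination h

/-- Let `W` be a skew-weighing matrix `W(n,m)` and let `G` be a group
of permutation automorphisms of `W` acting with `t` orbits, all of the same length `w`,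
such that the row orbit of each index equals its column orbit (the common partition being
`Orb`).  Let `R` be the `t × t` row orbit matrix of `W`, `B` the `t × b` incidence matrix
of an `(r,λ)`-design on `t` points, and `α ∈ F`.  If `r + α² + (t-1)λ + m ≠ 0` and
`r + α² - λ + m ≠ 0` in `F`, then `A = [R + α·I_t | B]` generates an LCD code of length
`t + b` over `F`. -/
theorem statement17 {F : Type*} [Field F] [Fintype F] {n m t b r lam w : ℕ}
    (hr : 0 < r) (hlam : 0 < lam)
    (W : Matrix (Fin n) (Fin n) ℤ)
    (hWent : ∀ i j, W i j = 0 ∨ W i j = 1 ∨ W i j = -1)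
    (hW : W * Wᵀ = (m : ℤ) • (1 : Matrix (Fin n) (Fin n) ℤ))
    (hskew : Wᵀ = -W)
    (G : Subgroup (Equiv.Perm (Fin n) × Equiv.Perm (Fin n)))
    (hG : ∀ g ∈ G, IsPermAut W g)
    (Orb : Fin t → Finset (Fin n))
    (hRorb : ∀ i, ∀ x ∈ Orb i, ∀ u, u ∈ Orb i ↔ ∃ g ∈ G, g.1 x = u)
    (hCorb : ∀ i, ∀ y ∈ Orb i, ∀ z, z ∈ Orb i ↔ ∃ g ∈ G, g.2 y = z)
    (hpart : ∀ x : Fin n, ∃! i, x ∈ Orb i)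
    (hlen : ∀ i, (Orb i).card = w)
    (ρ : Fin t → Fin n) (hρ : ∀ i, ρ i ∈ Orb i)
    (B : Matrix (Fin t) (Fin b) ℤ)
    (hBent : ∀ i j, B i j = 0 ∨ B i j = 1)
    (hB : B * Bᵀ = ((r : ℤ) - (lam : ℤ)) • (1 : Matrix (Fin t) (Fin t) ℤ)
          + Matrix.of (fun _ _ => (lam : ℤ)))
    (α : F)
    (h1 : (r : F) + α ^ 2 + ((t : F) - 1) * (lam : F) + (m : F) ≠ 0)
    (h2 : (r : F) + α ^ 2 - (lam : F) + (m : F) ≠ 0)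
    (A : Matrix (Fin t) (Fin t ⊕ Fin b) F)
    (hA : A = Matrix.fromCols
      ((Matrix.of fun i j => ∑ z ∈ Orb j, W (ρ i) z).map (Int.cast : ℤ → F)
        + α • (1 : Matrix (Fin t) (Fin t) F))
      (B.map (Int.cast : ℤ → F))) :
    IsLCD (rowSpan F A) :=
  statement17_general W hW hskew G hG Orb hRorb hCorb hpart hlen ρ hρ B hB α h1 h2 A hA
end
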